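/- arXiv:1508.07418 — 9 statements merged into one kernel-verified Lean document; each statement's English description precedes it below -/
import Mathlib

section
/- Let R be a commutative Bezout domain and a ∈ R. Then a is a Gelfand element (i.e., for all b, c ∈ R with bR + cR + aR = R there exist r, s ∈ R with a = rs, rR + bR = R, and sR + cR = R) if and only if the quotient ring R/aR is a Gelfand ring (for all x, y with x + y = 1 in R/aR there exist u, v with (1 + xu)(1 + yv) = 0). -/
/-- `a` is a Gelfand element: for all `b c` with `bR + cR + aR = R` there are
`r s` with `a = r * s`, `rR + bR = R`, `sR + cR = R`. -/
def IsGelfandElement {R : Type*} [CommRing R] (a : R) : Prop :=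
  ∀ b c : R, Ideal.span {b, c, a} = ⊤ →
    ∃ r s : R, a = r * s ∧ Ideal.span {r, b} = ⊤ ∧ Ideal.span {s, c} = ⊤

theorem stmt0 {R : Type*} [CommRing R] [IsDomain R] [IsBezout R] (a : R) :
    IsGelfandElement a ↔
      ∀ x y : R ⧸ Ideal.span ({a} : Set R), x + y = 1 →
        ∃ u v, (1 + x * u) * (1 + y * v) = 0 := by
  constructor
  · intro hG x y hxy
    obtain ⟨b, rfl⟩ := Ideal.Quotient.mk_surjective x
    obtain ⟨c, rfl⟩ := Ideal.Quotient.mk_surjective y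
    have hmem : b + c - 1 ∈ Ideal.span ({a} : Set R) := by
      rw [← Ideal.Quotient.eq_zero_iff_mem]
      simp [hxy, ← map_add, sub_eq_zero]
      calc (Ideal.Quotient.mk (Ideal.span ({a} : Set R))) (b + c)
          = Ideal.Quotient.mk _ b + Ideal.Quotient.mk _ c := by rw [map_add]
        _ = 1 := hxy
    obtain ⟨t, ht⟩ := Ideal.mem_span_singleton.mp hmem
    have htop : Ideal.span ({b, c, a} : Set R) = ⊤ := by
      rw [Ideal.eq_top_iff_one]
      have hb : b ∈ Ideal.span ({b, c, a} : Set R) := Ideal.subset_span (by simp)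
      have hc : c ∈ Ideal.span ({b, c, a} : Set R) := Ideal.subset_span (by simp)
      have ha : a ∈ Ideal.span ({b, c, a} : Set R) := Ideal.subset_span (by simp)
      have : (1 : R) = b + c - a * t := by linear_combination -ht
      rw [this]
      exact sub_mem (add_mem hb hc) (Ideal.mul_mem_right t _ ha)
    obtain ⟨r, s, hrs, hr, hs⟩ := hG b c htop
    obtain ⟨p, q, hpq⟩ := Ideal.mem_span_pair.mp (hr ▸ Submodule.mem_top : (1 : R) ∈ Ideal.span {r, b})
    obtain ⟨p', q', hpq'⟩ := Ideal.mem_span_pair.mp (hs ▸ Submodule.mem_top : (1 : R) ∈ Ideal.span {s, c})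
    refine ⟨Ideal.Quotient.mk _ (-q), Ideal.Quotient.mk _ (-q'), ?_⟩
    have key : ((1 : R) - b * q) * (1 - c * q') = a * (p * p') := by
      linear_combination (-(1 - c * q')) * hpq - p * r * hpq' - p * p' * hrs
    have e1 : (1 : R ⧸ Ideal.span ({a} : Set R)) +
        Ideal.Quotient.mk _ b * Ideal.Quotient.mk _ (-q) =
        Ideal.Quotient.mk _ ((1 : R) - b * q) := by
      simp only [map_sub, map_one, map_mul, map_neg]; ring
    have e2 : (1 : R ⧸ Ideal.span ({a} : Set R)) +
        Ideal.Quotient.mk _ c * Ideal.Quotient.mk _ (-q') =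
        Ideal.Quotient.mk _ ((1 : R) - c * q') := by
      simp only [map_sub, map_one, map_mul, map_neg]; ring
    rw [e1, e2, ← map_mul, key, Ideal.Quotient.eq_zero_iff_mem]
    exact Ideal.mul_mem_right _ _ (Ideal.subset_span rfl)
  · intro h b c htop
    classical
    letI : GCDMonoid R := IsBezout.toGCDDomain R
    have h1 : (1 : R) ∈ Ideal.span ({b, c, a} : Set R) := htop ▸ Submodule.mem_top
    rw [show ({b, c, a} : Set R) = insert b {c, a} from rfl, Ideal.mem_span_insert] at h1
    obtain ⟨β, z, hz, hone⟩ := h1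
    obtain ⟨γ, δ, hz2⟩ := Ideal.mem_span_pair.mp hz
    have hxy : (Ideal.Quotient.mk (Ideal.span ({a} : Set R))) (β * b) +
        Ideal.Quotient.mk _ z = 1 := by
      rw [← map_add, ← hone, map_one]
    obtain ⟨u, v, huv⟩ := h _ _ hxy
    obtain ⟨m, rfl⟩ := Ideal.Quotient.mk_surjective u
    obtain ⟨n, rfl⟩ := Ideal.Quotient.mk_surjective v
    have hdvd : a ∣ (1 + β * b * m) * (1 + z * n) := by
      rw [← Ideal.mem_span_singleton, ← Ideal.Quotient.eq_zero_iff_mem]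
      calc Ideal.Quotient.mk (Ideal.span ({a} : Set R)) ((1 + β * b * m) * (1 + z * n))
          = (1 + Ideal.Quotient.mk _ (β * b) * Ideal.Quotient.mk _ m) *
            (1 + Ideal.Quotient.mk _ z * Ideal.Quotient.mk _ n) := by
            simp only [map_mul, map_add, map_one]
        _ = 0 := huv
    obtain ⟨d₁, d₂, hd₁, hd₂, hk⟩ := exists_dvd_and_dvd_of_dvd_mul hdvd
    obtain ⟨w, hw⟩ := hd₁
    obtain ⟨w', hw'⟩ := hd₂
    refine ⟨d₁, d₂, hk, ?_, ?_⟩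
    · rw [Ideal.eq_top_iff_one, Ideal.mem_span_pair]
      exact ⟨w, -(β * m), by linear_combination -hw⟩
    · rw [Ideal.eq_top_iff_one, Ideal.mem_span_pair]
      refine ⟨w' - δ * n * d₁, -(γ * n), ?_⟩
      linear_combination -hw' - n * hz2 + δ * n * hk
end

section
/- Let R be a commutative Bezout domain and a ∈ R a nonzero element. Then a is a Gelfand element if and only if every prime ideal P of R containing a is contained in a unique maximal ideal of R. -/
theorem stmt1 {R : Type*} [CommRing R] [IsDomain R] [IsBezout R] (a : R) (ha : a ≠ 0) :
    IsGelfandElement a ↔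
      ∀ P : Ideal R, P.IsPrime → a ∈ P →
        ∃! M : Ideal R, M.IsMaximal ∧ P ≤ M := by
  constructor
  · intro hG P hP haP
    obtain ⟨M, hM, hPM⟩ := P.exists_le_maximal hP.ne_top
    refine ⟨M, ⟨hM, hPM⟩, ?_⟩
    rintro M' ⟨hM', hPM'⟩
    by_contra hne
    have hsup : M' ⊔ M = ⊤ := Ideal.IsMaximal.coprime_of_ne hM' hM hne
    have h1 : (1 : R) ∈ M' ⊔ M := hsup ▸ Submodule.mem_top
    obtain ⟨b, hb, c, hc, hbc⟩ := Submodule.mem_sup.mp h1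
    have hspan : Ideal.span ({b, c, a} : Set R) = ⊤ := by
      rw [Ideal.eq_top_iff_one, Ideal.mem_span_insert]
      exact ⟨1, c, Ideal.subset_span (by simp), by rw [one_mul, hbc]⟩
    obtain ⟨r, s, hrs, hr, hs⟩ := hG b c hspan
    rcases hP.mem_or_mem (hrs ▸ haP) with h | h
    · have hle : Ideal.span ({r, b} : Set R) ≤ M' :=
        Ideal.span_le.mpr (by rintro x (rfl | rfl); exacts [hPM' h, hb])
      exact hM'.ne_top (top_le_iff.mp (hr ▸ hle))
    · have hle : Ideal.span ({s, c} : Set R) ≤ M :=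
        Ideal.span_le.mpr (by rintro x (rfl | rfl); exacts [hPM h, hc])
      exact hM.ne_top (top_le_iff.mp (hs ▸ hle))
  · intro H b c hspan
    have h1 : (1 : R) ∈ Ideal.span ({b, c, a} : Set R) := hspan ▸ Submodule.mem_top
    rw [Ideal.mem_span_insert] at h1
    obtain ⟨u, z, hz, huz⟩ := h1
    obtain ⟨v, w, hvw⟩ := Ideal.mem_span_pair.mp hz
    -- huz : 1 = u * b + z, hvw : v * c + w * a = z
    -- Step 1: Gelfand ring argument in R/aR
    have key : ∃ r s : R, a ∣ (1 + r * (u * b)) * (1 + s * (v * c)) := by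
      by_contra hno
      push_neg at hno
      set T : Submonoid R :=
        { carrier := {z | ∃ x y : R, z = (1 + x * (u * b)) * (1 + y * (v * c))}
          one_mem' := ⟨0, 0, by ring⟩
          mul_mem' := by
            rintro z₁ z₂ ⟨x₁, y₁, rfl⟩ ⟨x₂, y₂, rfl⟩
            exact ⟨x₁ + x₂ + x₁ * x₂ * (u * b), y₁ + y₂ + y₁ * y₂ * (v * c), by ring⟩ } with hT
      have hdisj : Disjoint ((Ideal.span {a} : Ideal R) : Set R) (T : Set R) := by
        rw [Set.disjoint_left]
        rintro t ht ⟨x, y, rfl⟩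
        exact hno x y (Ideal.mem_span_singleton.mp ht)
      obtain ⟨P, hP, haP, hPdisj⟩ := Ideal.exists_le_prime_disjoint _ T hdisj
      have haP' : a ∈ P := haP (Ideal.subset_span rfl)
      obtain ⟨M, ⟨hM, hPM⟩, hMuniq⟩ := H P hP haP'
      have hmem : ∀ x : R, (∀ r : R, 1 - r * x ∈ (T : Set R)) → x ∈ M := by
        intro x hx
        have hne : P ⊔ Ideal.span {x} ≠ ⊤ := by
          intro htop
          have h1 : (1 : R) ∈ P ⊔ Ideal.span {x} := htop ▸ Submodule.mem_top
          obtain ⟨p, hp, z, hzx, hpz⟩ := Submodule.mem_sup.mp h1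
          obtain ⟨r, rfl⟩ := Ideal.mem_span_singleton'.mp hzx
          have hpT : p ∈ (T : Set R) := by
            have : p = 1 - r * x := by linear_combination hpz
            rw [this]; exact hx r
          exact Set.disjoint_left.mp hPdisj hp hpT
        obtain ⟨M₁, hM₁, hle⟩ := Ideal.exists_le_maximal _ hne
        have : M₁ = M := hMuniq M₁ ⟨hM₁, le_trans le_sup_left hle⟩
        exact this ▸ hle (le_sup_right (a := P) (Ideal.mem_span_singleton_self x))
      have hub : u * b ∈ M := hmem _ fun r => ⟨-r, 0, by ring⟩
      have hvc : v * c ∈ M := hmem _ fun r => ⟨0, -r, by ring⟩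
      have h1M : (1 : R) ∈ M := by
        have : (1 : R) = u * b + (v * c + w * a) := by rw [hvw, huz]
        rw [this]
        exact M.add_mem hub (M.add_mem hvc (M.mul_mem_left w (hPM haP')))
      exact hM.ne_top (Ideal.eq_top_iff_one M |>.mpr h1M)
    obtain ⟨r, s, t, hpq⟩ := key
    set p := 1 + r * (u * b) with hp_def
    set q := 1 + s * (v * c) with hq_def
    -- Step 2: Bezout gcd argument
    have hprin : (Ideal.span ({a, p} : Set R)).IsPrincipal :=
      IsBezout.isPrincipal_of_FG _ (Submodule.fg_span (Set.toFinite _))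
    obtain ⟨g, hg⟩ := hprin
    rw [Ideal.submodule_span_eq] at hg
    have hag : g ∣ a := Ideal.mem_span_singleton.mp (hg ▸ Ideal.subset_span (by simp))
    have hpg : g ∣ p := Ideal.mem_span_singleton.mp (hg ▸ Ideal.subset_span (by simp))
    obtain ⟨s₁, hs₁⟩ := hag
    obtain ⟨m, hm⟩ := hpg
    have hgmem : g ∈ Ideal.span ({a, p} : Set R) := hg ▸ Ideal.mem_span_singleton_self g
    obtain ⟨α, β, hαβ⟩ := Ideal.mem_span_pair.mp hgmem
    have hg0 : g ≠ 0 := fun h => ha (by rw [hs₁, h, zero_mul])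
    have hαβ1 : α * s₁ + β * m = 1 := by
      apply mul_left_cancel₀ hg0
      rw [mul_one]
      linear_combination hαβ - α * hs₁ - β * hm
    have hmq : m * q = s₁ * t := by
      apply mul_left_cancel₀ hg0
      linear_combination hpq - q * hm + t * hs₁
    have hsq : q = s₁ * (α * q + β * t) := by
      linear_combination (-q) * hαβ1 + β * hmq
    refine ⟨g, s₁, hs₁, ?_, ?_⟩
    · rw [Ideal.eq_top_iff_one, Ideal.mem_span_pair]
      exact ⟨m, -(r * u), by linear_combination -hm⟩
    · rw [Ideal.eq_top_iff_one, Ideal.mem_span_pair]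
      exact ⟨α * q + β * t, -(s * v), by linear_combination -hsq⟩
end

section
/- Let R be a commutative Bezout domain that is a ring of Gelfand range 1. Then every 2×2 lower triangular matrix ((a,0),(b,c)) with aR + bR + cR = R is equivalent to a matrix ((a,0),(d,c)) where d is a Gelfand element and aR + dR + cR = R; consequently R is an elementary divisor ring. -/
def GelfandRange1 (R : Type*) [CommRing R] : Prop :=
  ∀ a b : R, Ideal.span {a, b} = ⊤ → ∃ t : R, IsGelfandElement (a + b * t)

/-- Kaplansky's criterion for elementary divisor rings (commutative Bezout case). -/
def IsElementaryDivisorRing (R : Type*) [CommRing R] : Prop :=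
  ∀ a b c : R, Ideal.span {a, b, c} = ⊤ →
    ∃ p q : R, Ideal.span {a * p, b * p + c * q} = ⊤

section Helpers

variable {R : Type*} [CommRing R]

theorem mem_span_triple_iff {a b c z : R} :
    z ∈ Ideal.span ({a, b, c} : Set R) ↔ ∃ x y w : R, x*a + y*b + w*c = z := by
  constructor
  · intro h1
    rw [show ({a, b, c} : Set R) = insert a {b, c} from rfl, Ideal.span_insert,
      Submodule.mem_sup] at h1
    obtain ⟨u, hu, v, hv, huv⟩ := h1
    rw [Ideal.mem_span_singleton'] at hu
    obtain ⟨x, rfl⟩ := hu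
    rw [Ideal.mem_span_pair] at hv
    obtain ⟨y, w, rfl⟩ := hv
    exact ⟨x, y, w, by rw [← huv]; ring⟩
  · rintro ⟨x, y, w, rfl⟩
    have ha : a ∈ Ideal.span ({a, b, c} : Set R) := Ideal.subset_span (by simp)
    have hb : b ∈ Ideal.span ({a, b, c} : Set R) := Ideal.subset_span (by simp)
    have hc : c ∈ Ideal.span ({a, b, c} : Set R) := Ideal.subset_span (by simp)
    exact Ideal.add_mem _ (Ideal.add_mem _ (Ideal.mul_mem_left _ _ ha)
      (Ideal.mul_mem_left _ _ hb)) (Ideal.mul_mem_left _ _ hc)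

theorem span_triple_eq_top_iff {a b c : R} :
    Ideal.span ({a, b, c} : Set R) = ⊤ ↔ ∃ x y w : R, x*a + y*b + w*c = 1 := by
  rw [Ideal.eq_top_iff_one, mem_span_triple_iff]

theorem span_pair_eq_top_iff {a b : R} :
    Ideal.span ({a, b} : Set R) = ⊤ ↔ ∃ x y : R, x*a + y*b = 1 := by
  rw [Ideal.eq_top_iff_one, Ideal.mem_span_pair]

/-- Bezout domains have stable range 2 (both-coordinate form). -/
theorem sr2 [IsDomain R] [IsBezout R] (f g h : R)
    (H : Ideal.span ({f, g, h} : Set R) = ⊤) :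
    ∃ lam mu : R, Ideal.span ({f + lam*h, g + mu*h} : Set R) = ⊤ := by
  obtain ⟨x, y, w, hxyw⟩ := span_triple_eq_top_iff.mp H
  by_cases hfg : f = 0 ∧ g = 0
  · obtain ⟨rfl, rfl⟩ := hfg
    refine ⟨w, 0, ?_⟩
    rw [span_pair_eq_top_iff]
    exact ⟨1, 0, by linear_combination hxyw⟩
  · set e := IsBezout.gcd f g with he
    have hespan : Ideal.span ({e} : Set R) = Ideal.span ({f, g} : Set R) :=
      IsBezout.span_gcd f g
    have he0 : e ≠ 0 := by
      intro h0
      apply hfg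
      have hf : f ∈ Ideal.span ({e} : Set R) := by
        rw [hespan]; exact Ideal.subset_span (by simp)
      have hg : g ∈ Ideal.span ({e} : Set R) := by
        rw [hespan]; exact Ideal.subset_span (by simp)
      rw [h0, Ideal.span_singleton_eq_bot.mpr rfl] at hf hg
      exact ⟨by simpa using hf, by simpa using hg⟩
    obtain ⟨f₁, hf₁⟩ := IsBezout.gcd_dvd_left f g
    obtain ⟨g₁, hg₁⟩ := IsBezout.gcd_dvd_right f g
    have hemem : e ∈ Ideal.span ({f, g} : Set R) := by
      rw [← hespan]; exact Ideal.subset_span rfl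
    obtain ⟨A, B, hAB⟩ := Ideal.mem_span_pair.mp hemem
    have key : A*f₁ + B*g₁ = 1 := by
      have h2 : e * (A*f₁ + B*g₁) = e * 1 := by
        rw [mul_one]
        calc e * (A*f₁ + B*g₁) = A*(e*f₁) + B*(e*g₁) := by ring
        _ = A*f + B*g := by rw [← hf₁, ← hg₁]
        _ = e := hAB
      exact mul_left_cancel₀ he0 h2
    refine ⟨B, -A, ?_⟩
    rw [Ideal.eq_top_iff_one]
    set J := Ideal.span ({f + B*h, g + -A*h} : Set R) with hJ
    have hgen1 : f + B*h ∈ J := Ideal.subset_span (by simp)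
    have hgen2 : g + -A*h ∈ J := Ideal.subset_span (by simp)
    have hhJ : h ∈ J := by
      have hcomb : g₁*(f + B*h) + (-f₁)*(g + -A*h) = h := by
        linear_combination g₁ * hf₁ - f₁ * hg₁ + h * key
      rw [← hcomb]
      exact Ideal.add_mem _ (Ideal.mul_mem_left _ _ hgen1) (Ideal.mul_mem_left _ _ hgen2)
    have hfJ : f ∈ J := by
      have : f = (f + B*h) - B*h := by ring
      rw [this]
      exact Ideal.sub_mem _ hgen1 (Ideal.mul_mem_left _ _ hhJ)
    have hgJ : g ∈ J := by
      have : g = (g + -A*h) - (-A)*h := by ring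
      rw [this]
      exact Ideal.sub_mem _ hgen2 (Ideal.mul_mem_left _ _ hhJ)
    have h1 : (1:R) = x*f + y*g + w*h := hxyw.symm
    rw [h1]
    exact Ideal.add_mem _ (Ideal.add_mem _ (Ideal.mul_mem_left _ _ hfJ)
      (Ideal.mul_mem_left _ _ hgJ)) (Ideal.mul_mem_left _ _ hhJ)

/-- A Gelfand element in generic position admits a Kaplansky pair. -/
theorem kaplansky_of_gelfand [IsDomain R] [IsBezout R] (a d c : R)
    (hd : IsGelfandElement d) (h : Ideal.span ({a, d, c} : Set R) = ⊤) :
    ∃ p q : R, Ideal.span ({a * p, d * p + c * q} : Set R) = ⊤ := by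
  have hacd : Ideal.span ({a, c, d} : Set R) = ⊤ := by
    rw [show ({a, c, d} : Set R) = {a, d, c} by ext u; simp; tauto]
    exact h
  obtain ⟨r, s, hrs, hra, hsc⟩ := hd a c hacd
  obtain ⟨x₁, x₂, hx⟩ := span_pair_eq_top_iff.mp hra
  obtain ⟨w, z, hwz⟩ := span_pair_eq_top_iff.mp hsc
  -- the triple (a*w, r, a*c) is unimodular
  have htr : Ideal.span ({a*w, r, a*c} : Set R) = ⊤ := by
    by_contra hne
    obtain ⟨M, hM, hle⟩ := Ideal.exists_le_maximal _ hne
    have h1 : a*w ∈ M := hle (Ideal.subset_span (by simp))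
    have h2 : r ∈ M := hle (Ideal.subset_span (by simp))
    have h3 : a*c ∈ M := hle (Ideal.subset_span (by simp))
    have haM : a ∉ M := by
      intro haM
      have : (1:R) ∈ M := by
        rw [← hx]
        exact Ideal.add_mem _ (Ideal.mul_mem_left _ _ h2) (Ideal.mul_mem_left _ _ haM)
      exact hM.ne_top (Ideal.eq_top_of_isUnit_mem _ this isUnit_one)
    have hwM : w ∈ M := ((hM.isPrime.mem_or_mem h1).resolve_left haM)
    have hcM : c ∈ M := ((hM.isPrime.mem_or_mem h3).resolve_left haM)
    have : (1:R) ∈ M := by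
      rw [← hwz]
      exact Ideal.add_mem _ (Ideal.mul_mem_right _ _ hwM) (Ideal.mul_mem_left _ _ hcM)
    exact hM.ne_top (Ideal.eq_top_of_isUnit_mem _ this isUnit_one)
  obtain ⟨lam, mu, hsr⟩ := sr2 (a*w) r (a*c) htr
  refine ⟨w + c*lam, r*z - r*s*lam + a*mu, ?_⟩
  have e1 : a * (w + c*lam) = a*w + lam*(a*c) := by ring
  have e2 : d * (w + c*lam) + c * (r*z - r*s*lam + a*mu) = r + mu*(a*c) := by
    rw [hrs]; linear_combination r * hwz
  rw [e1, e2]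
  exact hsr

end Helpers

theorem stmt5 {R : Type*} [CommRing R] [IsDomain R] [IsBezout R]
    (h : GelfandRange1 R) :
    (∀ a b c : R, Ideal.span {a, b, c} = ⊤ →
      ∃ (d : R) (P Q : Matrix (Fin 2) (Fin 2) R), IsUnit P.det ∧ IsUnit Q.det ∧
        P * !![a, 0; b, c] * Q = !![a, 0; d, c] ∧
        IsGelfandElement d ∧ Ideal.span {a, d, c} = ⊤) ∧
      IsElementaryDivisorRing R := by
  -- common construction: a Gelfand d = b + α'*a + γ'*c with span{a,d,c} = ⊤
  have key : ∀ a b c : R, Ideal.span ({a, b, c} : Set R) = ⊤ →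
      ∃ d α' γ' : R, d = b + α'*a + γ'*c ∧ IsGelfandElement d ∧
        Ideal.span ({a, d, c} : Set R) = ⊤ := by
    intro a b c habc
    set g := IsBezout.gcd a c with hgdef
    have hspan_g : Ideal.span ({g} : Set R) = Ideal.span ({a, c} : Set R) :=
      IsBezout.span_gcd a c
    have hg_mem : g ∈ Ideal.span ({a, c} : Set R) := by
      rw [← hspan_g]; exact Ideal.subset_span rfl
    obtain ⟨α, γ, hαγ⟩ := Ideal.mem_span_pair.mp hg_mem
    have hbg : Ideal.span ({b, g} : Set R) = ⊤ := by
      rw [Ideal.eq_top_iff_one]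
      obtain ⟨x, y, w, hxyw⟩ := span_triple_eq_top_iff.mp habc
      have hamem : a ∈ Ideal.span ({b, g} : Set R) := by
        have : a ∈ Ideal.span ({g} : Set R) := by
          rw [hspan_g]; exact Ideal.subset_span (by simp)
        exact Ideal.span_mono (by simp) this
      have hcmem : c ∈ Ideal.span ({b, g} : Set R) := by
        have : c ∈ Ideal.span ({g} : Set R) := by
          rw [hspan_g]; exact Ideal.subset_span (by simp)
        exact Ideal.span_mono (by simp) this
      have hbmem : b ∈ Ideal.span ({b, g} : Set R) := Ideal.subset_span (by simp)
      have hmem : x*a + y*b + w*c ∈ Ideal.span ({b, g} : Set R) :=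
        Ideal.add_mem _ (Ideal.add_mem _
          (Ideal.mul_mem_left _ _ hamem) (Ideal.mul_mem_left _ _ hbmem))
          (Ideal.mul_mem_left _ _ hcmem)
      rwa [hxyw] at hmem
    obtain ⟨t, hd⟩ := h b g hbg
    refine ⟨b + g*t, α*t, γ*t, by rw [← hαγ]; ring, hd, ?_⟩
    rw [span_triple_eq_top_iff]
    obtain ⟨x, y, w, hxyw⟩ := span_triple_eq_top_iff.mp habc
    refine ⟨x - y*(α*t), y, w - y*(γ*t), ?_⟩
    rw [← hxyw, ← hαγ]; ring
  constructor
  · -- part 1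
    intro a b c habc
    obtain ⟨d, α', γ', hdef, hGelf, hadc⟩ := key a b c habc
    refine ⟨d, !![1, 0; α', 1], !![1, 0; γ', 1], ?_, ?_, ?_, hGelf, hadc⟩
    · rw [Matrix.det_fin_two_of]; simp
    · rw [Matrix.det_fin_two_of]; simp
    · ext i j
      fin_cases i <;> fin_cases j <;>
        simp [Matrix.mul_apply, Fin.sum_univ_succ] <;> rw [hdef] <;> ring
  · -- part 2 : elementary divisor ring
    intro a b c habc
    obtain ⟨d, α', γ', hdef, hGelf, hadc⟩ := key a b c habc
    obtain ⟨p, q, hpq⟩ := kaplansky_of_gelfand a d c hGelf hadc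
    refine ⟨p, q + γ'*p, ?_⟩
    rw [Ideal.eq_top_iff_one]
    set J := Ideal.span ({a * p, b * p + c * (q + γ'*p)} : Set R) with hJ
    have hgen1 : a * p ∈ J := Ideal.subset_span (by simp)
    have hgen2 : b * p + c * (q + γ'*p) ∈ J := Ideal.subset_span (by simp)
    have hdp : d * p + c * q ∈ J := by
      have hcomb : d * p + c * q = (b * p + c * (q + γ'*p)) + α' * (a * p) := by
        rw [hdef]; ring
      rw [hcomb]
      exact Ideal.add_mem _ hgen2 (Ideal.mul_mem_left _ _ hgen1)
    have h1 : (1:R) ∈ Ideal.span ({a * p, d * p + c * q} : Set R) := by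
      rw [hpq]; trivial
    obtain ⟨u, v, huv⟩ := Ideal.mem_span_pair.mp h1
    rw [← huv]
    exact Ideal.add_mem _ (Ideal.mul_mem_left _ _ hgen1) (Ideal.mul_mem_left _ _ hdp)
end

section
/- Let R be a commutative Bezout domain and let d = rs where rR + aR = R and sR + cR = R. Then there exist p₁, q₁ ∈ R such that ap₁R + (dp₁ + cq₁)R = R. -/
theorem stmt6 {R : Type*} [CommRing R] [IsDomain R] [IsBezout R]
    (a c d r s : R) (hd : d = r * s)
    (hra : Ideal.span {r, a} = ⊤) (hsc : Ideal.span {s, c} = ⊤) :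
    ∃ p₁ q₁ : R, Ideal.span {a * p₁, d * p₁ + c * q₁} = ⊤ := by
  obtain ⟨x, y, hxy⟩ :=
    Ideal.mem_span_pair.mp (hsc ▸ Submodule.mem_top : (1:R) ∈ Ideal.span {s, c})
  obtain ⟨u₀, v₀, huv₀⟩ :=
    Ideal.mem_span_pair.mp (hra ▸ Submodule.mem_top : (1:R) ∈ Ideal.span {r, a})
  by_cases hx : x = 0
  · refine ⟨0, 1, ?_⟩
    rw [Ideal.eq_top_iff_one]
    refine Ideal.mem_span_pair.mpr ⟨0, y, ?_⟩
    subst hx; linear_combination hxy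
  · obtain ⟨p₁, hp₁⟩ := IsBezout.gcd_dvd_left x (r * y)
    obtain ⟨q₁, hq₁⟩ := IsBezout.gcd_dvd_right x (r * y)
    have hmem : IsBezout.gcd x (r * y) ∈ Ideal.span ({x, r * y} : Set R) := by
      rw [← IsBezout.span_gcd]
      exact Ideal.subset_span rfl
    obtain ⟨u, v, huv⟩ := Ideal.mem_span_pair.mp hmem
    generalize hδ : IsBezout.gcd x (r * y) = δ at hp₁ hq₁ huv
    have hδ0 : δ ≠ 0 := by
      rintro rfl
      rw [zero_mul] at hp₁
      exact hx hp₁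
    refine ⟨p₁, q₁, ?_⟩
    have hcop : Ideal.span ({p₁, q₁} : Set R) = ⊤ := by
      rw [Ideal.eq_top_iff_one]
      refine Ideal.mem_span_pair.mpr ⟨u, v, ?_⟩
      apply mul_left_cancel₀ hδ0
      rw [mul_one]
      linear_combination huv - u * hp₁ - v * hq₁
    have hkey : δ * (d * p₁ + c * q₁) = r := by
      linear_combination (-d) * hp₁ - c * hq₁ + x * hd + r * hxy
    by_contra h
    obtain ⟨m, hm, hle⟩ := Ideal.exists_le_maximal _ h
    have hprime := hm.isPrime
    have hap : a * p₁ ∈ m := hle (Ideal.subset_span (by simp))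
    have hdc : d * p₁ + c * q₁ ∈ m := hle (Ideal.subset_span (by simp))
    have hr : r ∈ m := hkey ▸ Ideal.mul_mem_left m δ hdc
    have ha : a ∉ m := fun ham => hm.ne_top (Ideal.eq_top_iff_one m |>.mpr
      (huv₀ ▸ m.add_mem (Ideal.mul_mem_left m u₀ hr) (Ideal.mul_mem_left m v₀ ham)))
    have hp : p₁ ∈ m := (hprime.mem_or_mem hap).resolve_left ha
    have hcq : c * q₁ ∈ m := by
      have := m.sub_mem hdc (Ideal.mul_mem_left m d hp); simpa using this
    have hq₁m : q₁ ∉ m := by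
      intro hq₁m
      obtain ⟨α, β, hαβ⟩ :=
        Ideal.mem_span_pair.mp (hcop ▸ Submodule.mem_top : (1:R) ∈ Ideal.span {p₁, q₁})
      exact hm.ne_top (Ideal.eq_top_iff_one m |>.mpr
        (hαβ ▸ m.add_mem (Ideal.mul_mem_left m α hp) (Ideal.mul_mem_left m β hq₁m)))
    have hc : c ∈ m := (hprime.mem_or_mem hcq).resolve_right hq₁m
    have hxm : x ∈ m := hp₁ ▸ Ideal.mul_mem_left m δ hp
    exact hm.ne_top (Ideal.eq_top_iff_one m |>.mpr
      (hxy ▸ m.add_mem (Ideal.mul_mem_right s m hxm) (Ideal.mul_mem_left m y hc)))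
end

section
/- Every local Gelfand commutative Bezout domain is a ring of Gelfand range 1. -/
/-- `R` is a local Gelfand ring. -/
def LocalGelfandRing (R : Type*) [CommRing R] : Prop :=
  ∀ a b : R, Ideal.span {a, b} = ⊤ → IsGelfandElement a ∨ IsGelfandElement b

theorem stmt8 {R : Type*} [CommRing R] [IsDomain R] [IsBezout R]
    (h : LocalGelfandRing R) : GelfandRange1 R := by
  intro a b hab
  have h1 : (1 : R) ∈ Ideal.span ({a, b} : Set R) := hab ▸ Submodule.mem_top
  rw [Ideal.mem_span_pair] at h1
  obtain ⟨u, v, huv⟩ := h1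
  have h2 : Ideal.span ({a, a + b} : Set R) = ⊤ := by
    rw [Ideal.eq_top_iff_one, Ideal.mem_span_pair]
    exact ⟨u - v, v, by linear_combination huv⟩
  rcases h a (a + b) h2 with ha | hab'
  · exact ⟨0, by simpa using ha⟩
  · exact ⟨1, by simpa using hab'⟩
end

section
/- Let R be a commutative Bezout ring and let S(R) be the set of elements a ∈ R such that R/aR has stable range 1. If a, b ∈ S(R) then ab ∈ S(R). -/
def HasStableRange1 (R : Type*) [CommRing R] : Prop :=
  ∀ a b : R, Ideal.span {a, b} = ⊤ → ∃ t : R, IsUnit (a + b * t)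

/-!
An element is a unit modulo `I * J` as soon as it is a unit modulo `I` and modulo `J`, since
`(x u - 1) (x w - 1) ∈ I * J`. Given `x, y` comaximal modulo `I * J`, stable range modulo `I`
makes `z = x + y t` a unit modulo `I`, say `z u - 1 ∈ I`. The pair `z, y (z u - 1)` is then
comaximal modulo `J`, so stable range modulo `J` gives `s` with `z + y (z u - 1) s` a unit
modulo `J`; it is still a unit modulo `I`, hence modulo `I * J`.
-/

namespace Ideal.Quotient

variable {R : Type*} [CommRing R]

theorem isUnit_mk_iff_exists_mul_sub_one_mem {I : Ideal R} {x : R} :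
    IsUnit (mk I x) ↔ ∃ u, x * u - 1 ∈ I := by
  refine ⟨fun hx => ?_, fun ⟨u, hu⟩ => IsUnit.of_mul_eq_one (mk I u) ?_⟩
  · obtain ⟨uq, hu⟩ := hx.exists_right_inv
    obtain ⟨u, rfl⟩ := mk_surjective uq
    exact ⟨u, eq_zero_iff_mem.1 (by rw [map_sub, map_mul, hu, map_one, sub_self])⟩
  · rw [← map_mul, ← sub_eq_zero, ← map_one (mk I), ← map_sub]
    exact eq_zero_iff_mem.2 hu

theorem isUnit_mk_add_of_mem {I : Ideal R} {x i : R} (hx : IsUnit (mk I x)) (hi : i ∈ I) :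
    IsUnit (mk I (x + i)) := by
  rwa [map_add, eq_zero_iff_mem.2 hi, add_zero]

theorem isUnit_mk_mul {I J : Ideal R} {x : R} (hI : IsUnit (mk I x)) (hJ : IsUnit (mk J x)) :
    IsUnit (mk (I * J) x) := by
  obtain ⟨u, hu⟩ := isUnit_mk_iff_exists_mul_sub_one_mem.1 hI
  obtain ⟨w, hw⟩ := isUnit_mk_iff_exists_mul_sub_one_mem.1 hJ
  refine isUnit_mk_iff_exists_mul_sub_one_mem.2 ⟨u + w - x * u * w, ?_⟩
  convert (I * J).neg_mem (mul_mem_mul hu hw) using 1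
  ring

end Ideal.Quotient

section StableRange

open Ideal.Quotient

variable {R : Type*} [CommRing R]

theorem hasStableRange1_quotient_iff {I : Ideal R} :
    HasStableRange1 (R ⧸ I) ↔
      ∀ x y : R, (∃ c d, c * x + d * y - 1 ∈ I) → ∃ t, IsUnit (mk I (x + y * t)) := by
  have span_eq_top_iff (x y : R) :
      Ideal.span {mk I x, mk I y} = ⊤ ↔ ∃ c d, c * x + d * y - 1 ∈ I := by
    simp only [Ideal.eq_top_iff_one, Ideal.mem_span_pair, mk_surjective.exists,
      ← map_mul, ← map_add, ← map_one (mk I), Ideal.Quotient.eq]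
  refine ⟨fun h x y hxy => ?_, fun h xq yq hxy => ?_⟩
  · obtain ⟨tq, ht⟩ := h _ _ ((span_eq_top_iff x y).2 hxy)
    obtain ⟨t, rfl⟩ := mk_surjective tq
    exact ⟨t, by rwa [map_add, map_mul]⟩
  · obtain ⟨x, rfl⟩ := mk_surjective xq
    obtain ⟨y, rfl⟩ := mk_surjective yq
    obtain ⟨t, ht⟩ := h x y ((span_eq_top_iff x y).1 hxy)
    exact ⟨mk I t, by rwa [map_add, map_mul] at ht⟩

theorem HasStableRange1.quotient_mul {I J : Ideal R} (hI : HasStableRange1 (R ⧸ I))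
    (hJ : HasStableRange1 (R ⧸ J)) : HasStableRange1 (R ⧸ (I * J)) := by
  rw [hasStableRange1_quotient_iff] at hI hJ ⊢
  rintro x y ⟨c, d, hcd⟩
  obtain ⟨t, ht⟩ := hI x y ⟨c, d, Ideal.mul_le_left hcd⟩
  set z := x + y * t
  obtain ⟨u, hu⟩ := isUnit_mk_iff_exists_mul_sub_one_mem.1 ht
  have hcomax : ∃ c' d', c' * z + d' * (y * (z * u - 1)) - 1 ∈ J := by
    refine ⟨u - (z * u - 1) * c, c * t - d, ?_⟩
    rw [show (u - (z * u - 1) * c) * z + (c * t - d) * (y * (z * u - 1)) - 1 =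
      -((z * u - 1) * (c * x + d * y - 1)) by ring]
    exact J.neg_mem (J.mul_mem_left _ (Ideal.mul_le_right hcd))
  obtain ⟨s, hs⟩ := hJ z (y * (z * u - 1)) hcomax
  refine ⟨t + (z * u - 1) * s, ?_⟩
  have hcorr : y * (z * u - 1) * s ∈ I := by
    rw [mul_comm y, mul_assoc]
    exact I.mul_mem_right _ hu
  rw [show x + y * (t + (z * u - 1) * s) = z + y * (z * u - 1) * s by ring]
  exact isUnit_mk_mul (isUnit_mk_add_of_mem ht hcorr) hs

end StableRange

theorem stmt10_general {R : Type*} [CommRing R] (a b : R)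
    (ha : HasStableRange1 (R ⧸ Ideal.span ({a} : Set R)))
    (hb : HasStableRange1 (R ⧸ Ideal.span ({b} : Set R))) :
    HasStableRange1 (R ⧸ Ideal.span ({a * b} : Set R)) := by
  rw [← Ideal.span_singleton_mul_span_singleton]
  exact ha.quotient_mul hb

theorem stmt10 {R : Type*} [CommRing R] [IsBezout R] (a b : R)
    (ha : HasStableRange1 (R ⧸ Ideal.span ({a} : Set R)))
    (hb : HasStableRange1 (R ⧸ Ideal.span ({b} : Set R))) :
    HasStableRange1 (R ⧸ Ideal.span ({a * b} : Set R)) :=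
  stmt10_general a b ha hb
end

section
/- Let A be a commutative ring and I an ideal contained in the Jacobson radical of A. If A/I has stable range 1, then A has stable range 1. -/
theorem stmt13 {A : Type*} [CommRing A] (I : Ideal A)
    (hI : I ≤ Ideal.jacobson ⊥)
    (h : HasStableRange1 (A ⧸ I)) : HasStableRange1 A := by
  intro a b hab
  have h1 : (1 : A) ∈ Ideal.span {a, b} := hab ▸ Submodule.mem_top
  obtain ⟨x, y, hxy⟩ := Ideal.mem_span_pair.mp h1
  have h2 : Ideal.span {Ideal.Quotient.mk I a, Ideal.Quotient.mk I b} = ⊤ := by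
    rw [Ideal.eq_top_iff_one, Ideal.mem_span_pair]
    exact ⟨Ideal.Quotient.mk I x, Ideal.Quotient.mk I y, by
      rw [← map_mul, ← map_mul, ← map_add, hxy, map_one]⟩
  obtain ⟨t, ht⟩ := h _ _ h2
  obtain ⟨t', rfl⟩ := Ideal.Quotient.mk_surjective t
  refine ⟨t', ?_⟩
  obtain ⟨v, hv⟩ := isUnit_iff_exists_inv.mp ht
  obtain ⟨v', rfl⟩ := Ideal.Quotient.mk_surjective v
  have hmem : (a + b * t') * v' - 1 ∈ I := by
    rw [← Ideal.Quotient.eq_zero_iff_mem]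
    push_cast [map_sub, map_mul, map_add, map_one]
    rw [← hv]; ring_nf
  have := Ideal.isUnit_of_sub_one_mem_jacobson_bot _ (hI hmem)
  exact isUnit_of_mul_isUnit_left this
end

section
/- Every clean commutative ring has stable range 1. -/
/-- A clean ring: every element is a sum of a unit and an idempotent. -/
def IsCleanRing (R : Type*) [CommRing R] : Prop :=
  ∀ a : R, ∃ u e : R, IsUnit u ∧ IsIdempotentElem e ∧ a = u + e

section

variable {R : Type*} [CommRing R]

theorem IsIdempotentElem.isUnit_add_one_sub_mul {e a x : R} (he : IsIdempotentElem e)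
    (hax : (1 - e) * (a * x) = 1 - e) : IsUnit (e + (1 - e) * a) := by
  refine IsUnit.of_mul_eq_one (e + (1 - e) * x) ?_
  have hee : e * e = e := he
  linear_combination hax + (1 - x - a + a * x) * hee

theorem dvd_idempotent_of_mul_add_mul_eq_one {a b x y f : R} {u : Rˣ} (hf : IsIdempotentElem f)
    (hxy : x * a + y * b = 1) (hc : a * x = u + f) : b ∣ f := by
  refine ⟨-(y * f * ↑u⁻¹), ?_⟩
  have hff : f * f = f := hf
  linear_combination (f * ↑u⁻¹) * hxy - (f * ↑u⁻¹) * hc - f * u.mul_inv - ↑u⁻¹ * hff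

theorem one_sub_mul_mul_inv_eq_one_sub {a x f : R} {u : Rˣ} (hf : IsIdempotentElem f)
    (hc : a * x = u + f) : (1 - f) * (a * (x * ↑u⁻¹)) = 1 - f := by
  have hff : f * f = f := hf
  linear_combination (1 - f) * ↑u⁻¹ * hc + (1 - f) * u.mul_inv - ↑u⁻¹ * hff

end

theorem stmt18 {R : Type*} [CommRing R] (h : IsCleanRing R) :
    HasStableRange1 R := by
  intro a b hspan
  obtain ⟨x, y, hxy⟩ := Ideal.mem_span_pair.mp (hspan ▸ Submodule.mem_top : (1 : R) ∈ _)
  obtain ⟨_, f, ⟨u, rfl⟩, hf, hc⟩ := h (a * x)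
  obtain ⟨c, hbc⟩ := dvd_idempotent_of_mul_add_mul_eq_one hf hxy hc
  refine ⟨c * (1 - a), ?_⟩
  have hsum : a + b * (c * (1 - a)) = f + (1 - f) * a := by rw [← mul_assoc, ← hbc]; ring
  exact hsum ▸ hf.isUnit_add_one_sub_mul (one_sub_mul_mul_inv_eq_one_sub hf hc)
end

section
/- A commutative ring R is a Gelfand ring (for all a, b with a + b = 1 there exist x, y with (1+ax)(1+by) = 0) if and only if every prime ideal of R is contained in a unique maximal ideal. -/
theorem stmt19 {R : Type*} [CommRing R] :
    (∀ a b : R, a + b = 1 → ∃ x y : R, (1 + a * x) * (1 + b * y) = 0) ↔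
      ∀ P : Ideal R, P.IsPrime → ∃! M : Ideal R, M.IsMaximal ∧ P ≤ M := by
  constructor
  · intro hG P hP
    obtain ⟨M, hM, hPM⟩ := P.exists_le_maximal hP.ne_top
    refine ⟨M, ⟨hM, hPM⟩, ?_⟩
    rintro N ⟨hN, hPN⟩
    by_contra hne
    have hsup : N ⊔ M = ⊤ := hN.coprime_of_ne hM hne
    have h1 : (1 : R) ∈ N ⊔ M := hsup ▸ Submodule.mem_top
    rw [Submodule.mem_sup] at h1
    obtain ⟨a, ha, b, hb, hab⟩ := h1
    obtain ⟨x, y, hxy⟩ := hG a b hab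
    have h0 : (1 + a * x) * (1 + b * y) ∈ P := by rw [hxy]; exact P.zero_mem
    rcases hP.mem_or_mem h0 with h | h
    · have : (1 : R) ∈ N := by
        have := N.sub_mem (hPN h) (N.mul_mem_right x ha)
        simpa using this
      exact hN.ne_top (N.eq_top_iff_one.mpr this)
    · have : (1 : R) ∈ M := by
        have := M.sub_mem (hPM h) (M.mul_mem_right y hb)
        simpa using this
      exact hM.ne_top (M.eq_top_iff_one.mpr this)
  · intro hPM a b hab
    by_contra hno
    push_neg at hno
    set S : Submonoid R :=
      { carrier := {r | ∃ x y : R, (1 + a * x) * (1 + b * y) = r}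
        one_mem' := ⟨0, 0, by ring⟩
        mul_mem' := by
          rintro r s ⟨x, y, rfl⟩ ⟨x', y', rfl⟩
          exact ⟨x + x' + a * x * x', y + y' + b * y * y', by ring⟩ } with hS
    have hdis : Disjoint ((⊥ : Ideal R) : Set R) (S : Set R) := by
      rw [Set.disjoint_left]
      rintro r hr ⟨x, y, hxy⟩
      simp only [SetLike.mem_coe, Ideal.mem_bot] at hr
      exact (hno x y) (hr ▸ hxy)
    obtain ⟨p, hp, -, hpd⟩ := Ideal.exists_le_prime_disjoint (⊥ : Ideal R) S hdis
    have hproper : ∀ c : R, (∀ r : R, (1 + c * r) ∈ (S : Set R)) → p ⊔ Ideal.span {c} ≠ ⊤ := by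
      intro c hc htop
      rw [Ideal.eq_top_iff_one, Submodule.mem_sup] at htop
      obtain ⟨q, hq, s, hs, hqs⟩ := htop
      rw [Ideal.mem_span_singleton'] at hs
      obtain ⟨r, rfl⟩ := hs
      have : (1 + c * (-r)) ∈ p := by
        have : (1 : R) - r * c = q := by linear_combination -hqs
        rw [show (1 : R) + c * (-r) = 1 - r * c by ring, this]
        exact hq
      exact Set.disjoint_left.mp hpd this (hc (-r))
    have hpa : p ⊔ Ideal.span {a} ≠ ⊤ :=
      hproper a (fun r => ⟨r, 0, by ring⟩)
    have hpb : p ⊔ Ideal.span {b} ≠ ⊤ :=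
      hproper b (fun r => ⟨0, r, by ring⟩)
    obtain ⟨M₁, hM₁, hM₁le⟩ := Ideal.exists_le_maximal _ hpa
    obtain ⟨M₂, hM₂, hM₂le⟩ := Ideal.exists_le_maximal _ hpb
    obtain ⟨M, -, huniq⟩ := hPM p hp
    have e1 : M₁ = M := huniq M₁ ⟨hM₁, le_trans le_sup_left hM₁le⟩
    have e2 : M₂ = M := huniq M₂ ⟨hM₂, le_trans le_sup_left hM₂le⟩
    have haM : a ∈ M := e1 ▸ hM₁le (le_sup_right (a := p) (Ideal.mem_span_singleton_self a))
    have hbM : b ∈ M := e2 ▸ hM₂le (le_sup_right (a := p) (Ideal.mem_span_singleton_self b))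
    have : (1 : R) ∈ M := hab ▸ M.add_mem haM hbM
    exact (e1 ▸ hM₁).ne_top (M.eq_top_iff_one.mpr this)
end
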